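/- arXiv:1704.01388 — 2 statements merged into one kernel-verified Lean document; each statement's English description precedes it below -/
import Mathlib

section
/- For vectors v_1, ..., v_{r+m} in F_2^n and any j with 1 ≤ j ≤ m, define V'_j = Span{v_1, ..., v_{r+j-1}, v_{r+j+1}, ..., v_{r+m}} and d_j = d_H(v_{r+j}, V'_j), and define d_{r,m} = min over r ≤ r' < r+m of d_H(v_{r'+1}, Span{v_1,...,v_{r'}}). Then d_{r,m} ≤ d_j. -/
/-- Hamming distance from a vector to a set of vectors:
`min_{w ∈ S} |u + w|`, i.e. the minimum Hamming distance to a member of `S`. -/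
noncomputable def distToSet {n : ℕ} (u : Fin n → ZMod 2) (S : Set (Fin n → ZMod 2)) : ℕ :=
  sInf {d | ∃ w ∈ S, d = hammingDist u w}

/-!
Let `w` be a nearest vector to `v_{r+j}` in the span of the other vectors, and let `k` be the
largest index occurring in the expansion of `v_{r+j} - w` (so `k ≥ r + j`). Dividing by the
coefficient of `v_k` writes `v_{r+j} - w` as a nonzero multiple of `v_k - w'` with `w'` in the span
of the vectors before `v_k`, and scaling does not change Hamming weight, so
`d_H(v_k, Span{v_i : i < k}) ≤ |v_{r+j} - w| = d_j`.
-/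

open Submodule Set

theorem Finsupp.exists_leading_term {ι R M : Type*} [LinearOrder ι] [Semiring R]
    [AddCommMonoid M] [Module R M] (v : ι → M) {l : ι →₀ R} {j : ι} (hj : l j ≠ 0) :
    ∃ k, j ≤ k ∧ l k ≠ 0 ∧
      ∃ y ∈ span R (v '' Iio k), linearCombination R v l = l k • v k + y := by
  classical
  have hjl : j ∈ l.support := mem_support_iff.mpr hj
  set k := l.support.max' ⟨j, hjl⟩
  have hkl : k ∈ l.support := l.support.max'_mem _
  refine ⟨k, l.support.le_max' j hjl, mem_support_iff.mp hkl,
    ∑ i ∈ l.support.erase k, l i • v i, sum_mem fun i hi => smul_mem _ _ ?_, ?_⟩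
  · exact subset_span ⟨i, lt_of_le_of_ne (l.support.le_max' i (Finset.mem_of_mem_erase hi))
      (Finset.ne_of_mem_erase hi), rfl⟩
  · exact (Finset.add_sum_erase _ _ hkl).symm

theorem exists_sub_eq_smul_sub_of_mem_span {ι K M : Type*} [LinearOrder ι] [DivisionRing K]
    [AddCommGroup M] [Module K M] {v : ι → M} {j : ι} {w : M}
    (hw : w ∈ span K (v '' {i | i ≠ j})) :
    ∃ k, j ≤ k ∧ ∃ c ≠ (0 : K), ∃ w' ∈ span K (v '' Iio k), v j - w = c • (v k - w') := by
  classical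
  obtain ⟨l, hl, rfl⟩ := Finsupp.mem_span_image_iff_linearCombination K |>.mp hw
  have hlj : l j = 0 := (Finsupp.mem_supported' K l).mp hl j (by simp)
  set l' := Finsupp.single j (1 : K) - l
  have hl'j : l' j ≠ 0 := by simp [l', hlj]
  obtain ⟨k, hjk, hk, y, hy, hl'⟩ := Finsupp.exists_leading_term v hl'j
  refine ⟨k, hjk, l' k, hk, -((l' k)⁻¹ • y), neg_mem (smul_mem _ _ hy), ?_⟩
  rw [sub_neg_eq_add, smul_add, smul_inv_smul₀ hk, ← hl']
  simp [l', map_sub]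

theorem hammingDist_eq_hammingNorm_sub {ι : Type*} [Fintype ι] {β : ι → Type*}
    [∀ i, AddCommGroup (β i)] [∀ i, DecidableEq (β i)] (x y : ∀ i, β i) :
    hammingDist x y = hammingNorm (x - y) := by
  rw [hammingDist_comm, hammingDist_eq_hammingNorm, neg_add_eq_sub]

theorem hammingDist_eq_of_sub_eq_smul_sub {α K : Type*} [Fintype α] [DivisionRing K]
    [DecidableEq K] {x y x' y' : α → K} {c : K} (hc : c ≠ 0) (h : x - y = c • (x' - y')) :
    hammingDist x y = hammingDist x' y' := by
  rw [hammingDist_eq_hammingNorm_sub, h, hammingNorm_smul fun _ => smul_right_injective K hc,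
    hammingDist_eq_hammingNorm_sub]

theorem distToSet_le_hammingDist {n : ℕ} {u w : Fin n → ZMod 2} {S : Set (Fin n → ZMod 2)}
    (hw : w ∈ S) : distToSet u S ≤ hammingDist u w :=
  Nat.sInf_le ⟨w, hw, rfl⟩

theorem exists_hammingDist_eq_distToSet {n : ℕ} (u : Fin n → ZMod 2)
    {S : Set (Fin n → ZMod 2)} (hS : S.Nonempty) :
    ∃ w ∈ S, hammingDist u w = distToSet u S := by
  obtain ⟨w₀, hw₀⟩ := hS
  obtain ⟨w, hw, h⟩ := Nat.sInf_mem (s := {d | ∃ w ∈ S, d = hammingDist u w}) ⟨_, w₀, hw₀, rfl⟩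
  exact ⟨w, hw, h.symm⟩

theorem stmt0 (n r m : ℕ) (v : Fin (r + m) → (Fin n → ZMod 2))
    (j : ℕ) (hj1 : 1 ≤ j) (hjm : j ≤ m) :
    -- d_{r,m} = min_{r ≤ r' < r+m} d_H(v_{r'+1}, Span{v_1,...,v_{r'}})
    sInf {d | ∃ r' : Fin (r + m), r ≤ (r' : ℕ) ∧
        d = distToSet (v r')
          (Submodule.span (ZMod 2) {w | ∃ i : Fin (r + m), (i : ℕ) < (r' : ℕ) ∧ w = v i})}
      ≤
    -- d_j = d_H(v_{r+j}, Span of all the other vectors)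
    distToSet (v ⟨r + j - 1, by omega⟩)
      (Submodule.span (ZMod 2)
        {w | ∃ i : Fin (r + m), (i : ℕ) ≠ r + j - 1 ∧ w = v i}) := by
  set j₀ : Fin (r + m) := ⟨r + j - 1, by omega⟩
  have hothers : {w | ∃ i : Fin (r + m), (i : ℕ) ≠ r + j - 1 ∧ w = v i} = v '' {i | i ≠ j₀} := by
    ext; simp [j₀, Fin.ext_iff, eq_comm]
  have hbelow (k : Fin (r + m)) : {w | ∃ i : Fin (r + m), (i : ℕ) < k ∧ w = v i} = v '' Iio k := by
    ext; simp [eq_comm]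
  rw [hothers]
  obtain ⟨w, hw, hdist⟩ := exists_hammingDist_eq_distToSet (v j₀)
    (S := span (ZMod 2) (v '' {i | i ≠ j₀})) (Set.nonempty_of_mem (zero_mem _))
  obtain ⟨k, hjk, c, hc, w', hw', hsub⟩ := exists_sub_eq_smul_sub_of_mem_span hw
  have hk : r ≤ (k : ℕ) := le_trans (by simp [j₀]; omega) hjk
  calc _ ≤ distToSet (v k) (span (ZMod 2) {w | ∃ i : Fin (r + m), (i : ℕ) < k ∧ w = v i}) :=
        by exact Nat.sInf_le ⟨k, hk, rfl⟩
    _ ≤ hammingDist (v k) w' := distToSet_le_hammingDist (by rwa [hbelow])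
    _ = hammingDist (v j₀) w := (hammingDist_eq_of_sub_eq_smul_sub hc hsub).symm
    _ = _ := hdist
end

section
/- Let c_1, ..., c_{n+n_x} ∈ {0,1}, let I be a uniformly random subset of {1,...,n+n_x} of size n, and let T = {1,...,n+n_x} \ I. Let e_I = (1/n) Σ_{i∈I} c_i and e_T = (1/n_x) Σ_{i∈T} c_i. Then for any p ≥ 0 and ε > 0, P[(e_I > p + ε) ∧ (e_T ≤ p)] ≤ exp(−2 (n_x/(n+n_x))² n ε²). -/
/-!
Let `A` be the set of ones and `μ = #A / N` the population mean, `N = n + n_x`. Since the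
test rate is at most `p` while the sample rate exceeds `p + ε`, the sample count `#(I ∩ A)` is at
least `n (μ + s)` with `s = (n_x / N) ε`. Its upper tail is bounded by Markov's inequality for
`exp (t #(I ∩ A))`. Expanding `(1 + w) ^ #(I ∩ A)` in binomials and double counting shows
(Chvátal) that the average of this exponential moment over all `n`-subsets is at most
`(1 - μ + μ e^t) ^ n`, its value for sampling with replacement; Hoeffding's lemma bounds
`1 - μ + μ e^t ≤ exp (μ t + t² / 8)`, and `t = 4 s` gives `exp (-2 n s²)`.
-/

open Finset Real

open MeasureTheory ProbabilityTheory in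
theorem one_sub_add_mul_exp_le_exp {p : ℝ} (hp0 : 0 ≤ p) (hp1 : p ≤ 1) (t : ℝ) :
    1 - p + p * exp t ≤ exp (p * t + t ^ 2 / 8) := by
  have hq : 0 ≤ 1 - p := sub_nonneg.2 hp1
  let ν : Measure Bool := (1 - p).toNNReal • .dirac false + p.toNNReal • .dirac true
  let X : Bool → ℝ := fun b => if b then 1 else 0
  have : IsProbabilityMeasure ν := ⟨by
    simp [ν, ← ENNReal.coe_add, ← Real.toNNReal_add hq hp0]⟩
  have hmean : ν[X] = p := by
    rw [integral_add_measure .of_finite .of_finite]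
    simp [X, NNReal.smul_def, hp0]
  have hmgf : mgf X ν t = 1 - p + p * exp t := by
    rw [mgf_add_measure .of_finite .of_finite]
    simp [mgf, X, NNReal.smul_def, hp0, hq]
  have h := (hasSubgaussianMGF_of_mem_Icc (a := 0) (b := 1) (X := X) (μ := ν)
    Measurable.of_discrete.aemeasurable (ae_of_all _ fun b => by cases b <;> simp [X])).mgf_le t
  simp_rw [sub_eq_add_neg, mgf_add_const, hmean, hmgf] at h
  norm_num at h
  calc 1 - p + p * exp t = (1 - p + p * exp t) * exp (-(t * p)) * exp (p * t) := by
        rw [mul_assoc, ← exp_add, mul_comm t p, neg_add_cancel, exp_zero, mul_one]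
    _ ≤ exp (1 / 4 * t ^ 2 / 2) * exp (p * t) := by gcongr
    _ = exp (p * t + t ^ 2 / 8) := by rw [← exp_add]; ring_nf

theorem Nat.choose_mul_pow_le_choose_mul_pow {M N : ℕ} (h : M ≤ N) (j : ℕ) :
    M.choose j * N ^ j ≤ N.choose j * M ^ j := by
  have hprod (K L : ℕ) : j.factorial * (K.choose j * L ^ j) = ∏ i ∈ range j, (K - i) * L := by
    rw [← mul_assoc, ← Nat.descFactorial_eq_factorial_mul_choose, Nat.descFactorial_eq_prod_range,
      prod_mul_distrib, prod_const, card_range]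
  refine Nat.le_of_mul_le_mul_left ?_ j.factorial_pos
  rw [hprod, hprod]
  refine prod_le_prod' fun i _ => ?_
  rw [Nat.sub_mul, Nat.sub_mul, mul_comm N M]
  exact Nat.sub_le_sub_left (Nat.mul_le_mul_left i h) _

theorem one_add_pow_eq_sum_range_choose_mul {R : Type*} [CommSemiring R] (w : R) {k n : ℕ}
    (hk : k ≤ n) : (1 + w) ^ k = ∑ j ∈ range (n + 1), k.choose j * w ^ j := by
  rw [add_comm, add_pow]
  refine sum_subset (range_subset_range.2 (by omega)) (fun j _ hj => ?_) |>.trans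
    (sum_congr rfl fun j _ => by ring)
  rw [Nat.choose_eq_zero_of_lt (by simpa using hj)]
  simp

section Sampling

variable {α : Type*} [Fintype α] [DecidableEq α]

theorem sum_powersetCard_choose_card_inter (A : Finset α) {n j : ℕ} (hj : j ≤ n) :
    ∑ I ∈ powersetCard n univ, (#(I ∩ A)).choose j
      = (#A).choose j * (Fintype.card α - j).choose (n - j) := by
  have hcount (I : Finset α) : (#(I ∩ A)).choose j = #{S ∈ powersetCard j A | S ⊆ I} := by
    rw [← card_powersetCard]
    congr 1
    ext S
    simp only [mem_powersetCard, mem_filter, subset_inter_iff]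
    tauto
  calc ∑ I ∈ powersetCard n univ, (#(I ∩ A)).choose j
      = ∑ S ∈ powersetCard j A, #{I ∈ powersetCard n univ | S ⊆ I} := by
        simp_rw [hcount]
        exact sum_card_bipartiteAbove_eq_sum_card_bipartiteBelow _
    _ = ∑ S ∈ powersetCard j A, (Fintype.card α - j).choose (n - j) :=
        sum_congr rfl fun S hS => by
          rw [card_filter_powersetCard_subset S univ n (subset_univ S)
            ((mem_powersetCard.1 hS).2 ▸ hj), card_univ, (mem_powersetCard.1 hS).2]
    _ = (#A).choose j * (Fintype.card α - j).choose (n - j) := by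
        rw [sum_const, card_powersetCard, smul_eq_mul]

theorem sum_powersetCard_one_add_pow_card_inter {R : Type*} [CommSemiring R]
    (A : Finset α) (n : ℕ) (w : R) :
    ∑ I ∈ powersetCard n univ, (1 + w) ^ #(I ∩ A)
      = ∑ j ∈ range (n + 1), ((#A).choose j * (Fintype.card α - j).choose (n - j) : ℕ) * w ^ j := by
  calc ∑ I ∈ powersetCard n univ, (1 + w) ^ #(I ∩ A)
      = ∑ I ∈ powersetCard n univ, ∑ j ∈ range (n + 1), (#(I ∩ A)).choose j * w ^ j :=
        sum_congr rfl fun I hI => one_add_pow_eq_sum_range_choose_mul w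
          ((card_le_card inter_subset_left).trans (mem_powersetCard.1 hI).2.le)
    _ = _ := by
        rw [sum_comm]
        refine sum_congr rfl fun j hj => ?_
        rw [← sum_mul, ← Nat.cast_sum,
          sum_powersetCard_choose_card_inter A (Nat.lt_succ_iff.1 (mem_range.1 hj))]

theorem sum_powersetCard_one_add_pow_card_inter_le [Nonempty α] (A : Finset α) (n : ℕ)
    {w : ℝ} (hw : 0 ≤ w) :
    ∑ I ∈ powersetCard n univ, (1 + w) ^ #(I ∩ A)
      ≤ (Fintype.card α).choose n * (1 + w * (#A / Fintype.card α)) ^ n := by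
  set N := Fintype.card α
  set M := #A
  have hN : (0 : ℝ) < N := by exact_mod_cast Fintype.card_pos
  rw [sum_powersetCard_one_add_pow_card_inter, add_comm 1, add_pow, mul_sum]
  refine sum_le_sum fun j hj => ?_
  have hchoose : ((M.choose j : ℕ) : ℝ) ≤ N.choose j * (M / N) ^ j := by
    rw [div_pow, mul_div_assoc', le_div_iff₀ (by positivity)]
    exact_mod_cast Nat.choose_mul_pow_le_choose_mul_pow (card_le_univ A) j
  have hsplit : (N.choose n * n.choose j : ℝ) = N.choose j * (N - j).choose (n - j) := by
    exact_mod_cast Nat.choose_mul (Nat.lt_succ_iff.1 (mem_range.1 hj))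
  calc ((M.choose j * (N - j).choose (n - j) : ℕ) : ℝ) * w ^ j
      = w ^ j * (N - j).choose (n - j) * M.choose j := by push_cast; ring
    _ ≤ w ^ j * (N - j).choose (n - j) * (N.choose j * (M / N) ^ j) := by gcongr
    _ = N.choose n * ((w * (M / N)) ^ j * 1 ^ (n - j) * n.choose j) := by
        rw [one_pow, mul_pow]
        linear_combination -(w ^ j * (M / N) ^ j) * hsplit

-- `t = 4 s` minimises the exponent `n (t² / 8 - t s)` produced by Markov's inequality.
theorem card_filter_powersetCard_le_choose_mul_exp [Nonempty α] (A : Finset α) (n : ℕ)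
    {s : ℝ} (hs : 0 ≤ s) :
    (#{I ∈ powersetCard n univ | n * (#A / Fintype.card α + s) ≤ #(I ∩ A)} : ℝ)
      ≤ (Fintype.card α).choose n * exp (-2 * n * s ^ 2) := by
  set μ : ℝ := #A / Fintype.card α
  have hμ0 : 0 ≤ μ := by positivity
  have hμ1 : μ ≤ 1 := div_le_one_of_le₀ (by exact_mod_cast card_le_univ A) (by positivity)
  set t := 4 * s with ht
  set F : Finset (Finset α) := {I ∈ powersetCard n univ | n * (μ + s) ≤ #(I ∩ A)}
  have hmarkov : (#F : ℝ) * exp (t * (n * (μ + s)))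
      ≤ ∑ I ∈ powersetCard n univ, (1 + (exp t - 1)) ^ #(I ∩ A) := by
    simp_rw [add_sub_cancel, ← exp_nat_mul, mul_comm _ t]
    calc (#F : ℝ) * exp (t * (n * (μ + s))) ≤ ∑ I ∈ F, exp (t * #(I ∩ A)) := by
          rw [← nsmul_eq_mul]
          exact card_nsmul_le_sum _ _ _ fun I hI =>
            exp_le_exp.2 (mul_le_mul_of_nonneg_left (mem_filter.1 hI).2 (by positivity))
      _ ≤ _ := sum_le_sum_of_subset_of_nonneg (filter_subset _ _) fun _ _ _ => (exp_pos _).le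
  have hmgf : (1 + (exp t - 1) * μ) ^ n ≤ exp (-2 * n * s ^ 2) * exp (t * (n * (μ + s))) :=
    calc (1 + (exp t - 1) * μ) ^ n = (1 - μ + μ * exp t) ^ n := by ring
      _ ≤ exp (μ * t + t ^ 2 / 8) ^ n := by
          gcongr
          exact one_sub_add_mul_exp_le_exp hμ0 hμ1 t
      _ = exp (-2 * n * s ^ 2) * exp (t * (n * (μ + s))) := by
          rw [← exp_nat_mul, ← exp_add, ht]
          ring_nf
  have hchvatal := sum_powersetCard_one_add_pow_card_inter_le A n
    (sub_nonneg.2 (one_le_exp (by positivity : 0 ≤ t)))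
  refine le_of_mul_le_mul_right ?_ (exp_pos (t * (n * (μ + s))))
  calc (#F : ℝ) * exp (t * (n * (μ + s)))
      ≤ (Fintype.card α).choose n * (1 + (exp t - 1) * μ) ^ n := hmarkov.trans hchvatal
    _ ≤ _ := by
        rw [mul_assoc]
        gcongr

theorem sum_eq_card_inter_of_eq_zero_or_eq_one {c : α → ℝ} (hc : ∀ i, c i = 0 ∨ c i = 1)
    (s : Finset α) : ∑ i ∈ s, c i = #(s ∩ ({i | c i = 1} : Finset α)) := by
  rw [inter_filter, inter_univ, natCast_card_filter]
  exact sum_congr rfl fun i _ => by rcases hc i with h | h <;> simp [h]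

end Sampling

theorem mul_mean_add_le_of_lt_div_of_div_le {a b p ε n m : ℝ} (hn : 0 < n) (hm : 0 < m)
    (ha : p + ε < a / n) (hb : b / m ≤ p) :
    n * ((a + b) / (n + m) + m / (n + m) * ε) ≤ a := by
  rw [lt_div_iff₀ hn] at ha
  rw [div_le_iff₀ hm] at hb
  have hnm : 0 < n + m := by positivity
  rw [show n * ((a + b) / (n + m) + m / (n + m) * ε) = n * (a + b + m * ε) / (n + m) by
    field_simp, div_le_iff₀ hnm]
  nlinarith

theorem stmt9_general (n nx : ℕ) (hn : 0 < n) (hnx : 0 < nx)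
    (c : Fin (n + nx) → ℝ) (hc : ∀ i, c i = 0 ∨ c i = 1)
    (p ε : ℝ) (hε : 0 < ε) :
    (((Finset.univ : Finset (Fin (n + nx))).powersetCard n).filter
        (fun I => (∑ i ∈ I, c i) / n > p + ε ∧ (∑ i ∈ Iᶜ, c i) / nx ≤ p)).card /
      (((Finset.univ : Finset (Fin (n + nx))).powersetCard n).card : ℝ)
    ≤ Real.exp (-2 * ((nx : ℝ) / (n + nx)) ^ 2 * n * ε ^ 2) := by
  have : NeZero (n + nx) := ⟨by omega⟩
  set A : Finset (Fin (n + nx)) := {i | c i = 1}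
  have hsum := sum_eq_card_inter_of_eq_zero_or_eq_one hc
  have hevent : (powersetCard n univ).filter
        (fun I => (∑ i ∈ I, c i) / n > p + ε ∧ (∑ i ∈ Iᶜ, c i) / nx ≤ p)
      ⊆ {I ∈ powersetCard n (univ : Finset (Fin (n + nx))) |
          n * (#A / Fintype.card (Fin (n + nx)) + nx / (n + nx) * ε) ≤ #(I ∩ A)} := by
    intro I
    simp only [mem_filter]
    refine fun ⟨hIn, hI, hT⟩ => ⟨hIn, ?_⟩
    have := mul_mean_add_le_of_lt_div_of_div_le (by positivity) (by positivity) hI hT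
    rw [sum_add_sum_compl, hsum, hsum, univ_inter] at this
    simpa using this
  rw [div_le_iff₀ (by simp [Nat.choose_pos]), card_powersetCard, card_univ]
  calc _ ≤ _ := by exact_mod_cast card_le_card hevent
    _ ≤ _ := card_filter_powersetCard_le_choose_mul_exp A n (by positivity)
    _ = _ := by rw [Fintype.card_fin, mul_comm]; congr 2; push_cast; ring

/-- Sampling without replacement: a uniformly random subset `I` of size `n`
(the INFO bits) with complement `T` of size `n_x` (the TEST bits), from a
`{0,1}`-valued population of size `n + n_x`.  The probability that the sample
error rate exceeds `p + ε` while the test error rate is at most `p` is at most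
`exp(−2 (n_x/(n+n_x))² n ε²)`. -/
theorem stmt9 (n nx : ℕ) (hn : 0 < n) (hnx : 0 < nx)
    (c : Fin (n + nx) → ℝ) (hc : ∀ i, c i = 0 ∨ c i = 1)
    (p ε : ℝ) (hp : 0 ≤ p) (hε : 0 < ε) :
    (((Finset.univ : Finset (Fin (n + nx))).powersetCard n).filter
        (fun I => (∑ i ∈ I, c i) / n > p + ε ∧ (∑ i ∈ Iᶜ, c i) / nx ≤ p)).card /
      (((Finset.univ : Finset (Fin (n + nx))).powersetCard n).card : ℝ)
    ≤ Real.exp (-2 * ((nx : ℝ) / (n + nx)) ^ 2 * n * ε ^ 2) :=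
  stmt9_general n nx hn hnx c hc p ε hε
end
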